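/- Equational differential variant rule (dV=): Let f be globally Lipschitz on ℝⁿ, p polynomial, ε > 0. Suppose ∇p(y)·f(y) ≥ ε whenever p(y) < 0. Then for every initial state x₀ with p(x₀) ≤ 0, the solution φ satisfies p(φ(τ)) = 0 for some τ ≥ 0. -/

import Mathlib

/-! Along the solution, `t ↦ p (φ t)` has the Lie derivative `∇p · f` as its derivative, so as
long as it is negative it grows at rate at least `ε`. It therefore cannot stay negative beyond
time `-p x₀ / ε + 1`, and the intermediate value theorem produces the zero. -/

open MvPolynomial Set

theorem MvPolynomial.hasDerivAt_eval_comp {σ 𝕜 : Type*} [Fintype σ] [NontriviallyNormedField 𝕜]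
    (p : MvPolynomial σ 𝕜) {x : 𝕜 → σ → 𝕜} {v : σ → 𝕜} {t : 𝕜} (hx : HasDerivAt x v t) :
    HasDerivAt (fun s => eval (x s) p) (∑ i, eval (x t) (pderiv i p) * v i) t := by
  induction p using MvPolynomial.induction_on with
  | C a => simpa using hasDerivAt_const t a
  | add p q hp hq =>
    simpa only [map_add, eval_add, add_mul, Finset.sum_add_distrib] using hp.fun_add hq
  | mul_X p i hp =>
    have hxi : HasDerivAt (fun s => x s i) (v i) t := hasDerivAt_pi.1 hx i
    simp only [map_mul, eval_X]
    refine (hp.fun_mul hxi).congr_deriv ?_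
    simp only [pderiv_mul, map_add, map_mul, eval_X, add_mul, Finset.sum_add_distrib,
      Finset.sum_mul]
    congr 1
    · exact Finset.sum_congr rfl fun j _ => by ring
    · rw [Finset.sum_eq_single i (fun j _ hj => by simp [pderiv_X_of_ne hj.symm]) (by simp)]
      simp

theorem exists_eq_zero_of_le_deriv_of_neg {g g' : ℝ → ℝ} {ε : ℝ} (hε : 0 < ε) (hg0 : g 0 ≤ 0)
    (hg : ∀ t, 0 ≤ t → HasDerivAt g (g' t) t) (hg' : ∀ t, 0 ≤ t → g t < 0 → ε ≤ g' t) :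
    ∃ τ, 0 ≤ τ ∧ g τ = 0 := by
  by_contra! hne
  have hcont : ContinuousOn g (Ici 0) := fun t ht => (hg t ht).continuousAt.continuousWithinAt
  have hneg : ∀ t, 0 ≤ t → g t < 0 := by
    intro t ht
    by_contra! hgt
    obtain ⟨τ, hτ, hτ0⟩ :=
      isPreconnected_Ici.intermediate_value self_mem_Ici ht hcont ⟨hg0, hgt⟩
    exact hne τ hτ hτ0
  set T := -g 0 / ε + 1
  have hT : 0 ≤ T := by
    have := div_nonneg (neg_nonneg.2 (hneg 0 le_rfl).le) hε.le
    linarith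
  have hgrowth : ε * (T - 0) ≤ g T - g 0 := by
    refine (convex_Ici 0).mul_sub_le_image_sub_of_le_deriv hcont ?_ ?_ 0 self_mem_Ici T hT hT <;>
      rw [interior_Ici]
    · exact fun t ht => (hg t (le_of_lt ht)).differentiableAt.differentiableWithinAt
    · intro t ht
      rw [(hg t (le_of_lt ht)).deriv]
      exact hg' t (le_of_lt ht) (hneg t (le_of_lt ht))
  have hεT : ε * (T - 0) = -g 0 + ε := by simp only [T]; field_simp; ring
  linarith [hneg T hT]

theorem dV_eq_general (n : ℕ) (f : (Fin n → ℝ) → (Fin n → ℝ))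
    (p : MvPolynomial (Fin n) ℝ) (ε : ℝ) (hε : 0 < ε)
    (hlie : ∀ y : Fin n → ℝ, eval y p < 0 →
      ε ≤ ∑ i : Fin n, eval y (pderiv i p) * f y i)
    (x₀ : Fin n → ℝ) (hx₀ : eval x₀ p ≤ 0)
    (φ : ℝ → (Fin n → ℝ)) (hφ0 : φ 0 = x₀)
    (hsol : ∀ t : ℝ, 0 ≤ t → HasDerivAt φ (f (φ t)) t) :
    ∃ τ : ℝ, 0 ≤ τ ∧ eval (φ τ) p = 0 :=
  exists_eq_zero_of_le_deriv_of_neg hε (by rwa [hφ0])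
    (fun t ht => p.hasDerivAt_eval_comp (hsol t ht)) (fun t _ => hlie (φ t))

/-- Equational differential variant rule dV=: if `f` is globally Lipschitz, the
Lie derivative of `p` along `f` is at least `ε > 0` wherever `p < 0`, and the
solution starts where `p ≤ 0`, then `p = 0` is reached at some finite time. -/
theorem dV_eq (n : ℕ) (f : (Fin n → ℝ) → (Fin n → ℝ)) (K : NNReal)
    (hf : LipschitzWith K f) (p : MvPolynomial (Fin n) ℝ) (ε : ℝ) (hε : 0 < ε)
    (hlie : ∀ y : Fin n → ℝ, eval y p < 0 →
      ε ≤ ∑ i : Fin n, eval y (pderiv i p) * f y i)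
    (x₀ : Fin n → ℝ) (hx₀ : eval x₀ p ≤ 0)
    (φ : ℝ → (Fin n → ℝ)) (hφ0 : φ 0 = x₀)
    (hsol : ∀ t : ℝ, 0 ≤ t → HasDerivAt φ (f (φ t)) t) :
    ∃ τ : ℝ, 0 ≤ τ ∧ eval (φ τ) p = 0 :=
  dV_eq_general n f p ε hε hlie x₀ hx₀ φ hφ0 hsol
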